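/- arXiv:0709.0454 — 2 statements merged into one kernel-verified Lean document; each statement's English description precedes it below -/
import Mathlib

section
/- Let A, B, C be three non-collinear points in the Euclidean plane, with incenter I and excenters E_A, E_B, E_C. Then (dist(E_A,I) · dist(E_B,E_C)) / (dist(E_A,E_C) · dist(E_B,I)) = dist(C,B)/dist(C,A). (This is the modulus part of the theorem on cross ratios of dual quadruplets.) -/
/-- The incenter of the triangle `A B C`. -/
noncomputable def incenterPt (A B C : EuclideanSpace ℝ (Fin 2)) : EuclideanSpace ℝ (Fin 2) :=
  (dist B C + dist C A + dist A B)⁻¹ •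
    (dist B C • A + dist C A • B + dist A B • C)

/-- The excenter of the triangle `A B C` opposite the first vertex `A`. -/
noncomputable def excenterPt (A B C : EuclideanSpace ℝ (Fin 2)) : EuclideanSpace ℝ (Fin 2) :=
  (-dist B C + dist C A + dist A B)⁻¹ •
    ((-dist B C) • A + dist C A • B + dist A B • C)

/-! The segments `I E_A` and `E_B E_C` have squared lengths `4a²bc / ((b + c - a)(a + b + c))`
and `4a²bc / ((a - b + c)(a + b - c))` (classically `a / cos (A/2)` and `a / sin (A/2)`), so their
product is `a` times `4abc / √((a + b + c)(b + c - a)(a - b + c)(a + b - c)) = 4R`, which is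
symmetric in the vertices. The segments `E_B I` and `E_C E_A` are the same pair for the vertex
`B`, whence the ratio `a / b`. -/

theorem neg_dist_add_dist_add_dist_pos {V P : Type*} [NormedAddCommGroup V] [NormedSpace ℝ V]
    [StrictConvexSpace ℝ V] [MetricSpace P] [NormedAddTorsor V P] {A B C : P}
    (h : ¬ Collinear ℝ {A, B, C}) : 0 < -dist B C + dist C A + dist A B := by
  have hlt : dist B C < dist B A + dist A C :=
    dist_lt_dist_add_dist_iff.2 fun hw => h (by simpa [Set.insert_comm] using hw.collinear)
  rw [dist_comm B A, dist_comm A C] at hlt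
  linarith

theorem norm_smul_sub_add_smul_sub_sq {V : Type*} [NormedAddCommGroup V] [InnerProductSpace ℝ V]
    (s t : ℝ) (A B C : V) :
    ‖s • (B - A) + t • (C - A)‖ ^ 2 =
      s ^ 2 * dist A B ^ 2 + s * t * (dist A B ^ 2 + dist C A ^ 2 - dist B C ^ 2)
        + t ^ 2 * dist C A ^ 2 := by
  have hBC : B - C = (B - A) - (C - A) := by abel
  rw [dist_comm A B, dist_eq_norm, dist_eq_norm, dist_eq_norm, hBC, norm_add_sq_real,
    norm_sub_sq_real (B - A) (C - A), norm_smul, norm_smul, real_inner_smul_left,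
    real_inner_smul_right, mul_pow, mul_pow, Real.norm_eq_abs, Real.norm_eq_abs, sq_abs, sq_abs]
  ring

theorem incenterPt_rotate (A B C : EuclideanSpace ℝ (Fin 2)) :
    incenterPt B C A = incenterPt A B C := by
  rw [incenterPt, incenterPt]
  congr 1
  · ring
  · abel

theorem dist_excenterPt_incenterPt_sq (A B C : EuclideanSpace ℝ (Fin 2))
    (hA : -dist B C + dist C A + dist A B ≠ 0) (hs : dist B C + dist C A + dist A B ≠ 0) :
    dist (excenterPt A B C) (incenterPt A B C) ^ 2 =
      4 * dist B C ^ 2 * dist C A * dist A B /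
        ((-dist B C + dist C A + dist A B) * (dist B C + dist C A + dist A B)) := by
  have hsub : excenterPt A B C - incenterPt A B C =
      (2 * dist B C / ((-dist B C + dist C A + dist A B) * (dist B C + dist C A + dist A B))) •
        (dist C A • (B - A) + dist A B • (C - A)) := by
    rw [excenterPt, incenterPt]
    match_scalars <;> field_simp <;> ring
  rw [dist_eq_norm, hsub, norm_smul, mul_pow, norm_smul_sub_add_smul_sub_sq, Real.norm_eq_abs,
    sq_abs]
  field_simp
  ring

theorem dist_excenterPt_excenterPt_sq (A B C : EuclideanSpace ℝ (Fin 2))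
    (hB : -dist C A + dist A B + dist B C ≠ 0) (hC : -dist A B + dist B C + dist C A ≠ 0) :
    dist (excenterPt B C A) (excenterPt C A B) ^ 2 =
      4 * dist B C ^ 2 * dist C A * dist A B /
        ((-dist C A + dist A B + dist B C) * (-dist A B + dist B C + dist C A)) := by
  have hsub : excenterPt B C A - excenterPt C A B =
      (2 * dist B C / ((-dist C A + dist A B + dist B C) * (-dist A B + dist B C + dist C A))) •
        ((-dist C A) • (B - A) + dist A B • (C - A)) := by
    rw [excenterPt, excenterPt]
    match_scalars <;> field_simp <;> ring
  rw [dist_eq_norm, hsub, norm_smul, mul_pow, norm_smul_sub_add_smul_sub_sq, Real.norm_eq_abs,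
    sq_abs]
  field_simp
  ring

/-- The modulus part of the cross-ratio theorem for dual quadruplets:
`(|E_A I|·|E_B E_C|)/(|E_A E_C|·|E_B I|) = |CB|/|CA|`. -/
theorem cross_ratio_modulus (A B C : EuclideanSpace ℝ (Fin 2))
    (h : AffineIndependent ℝ ![A, B, C])
    (I : EuclideanSpace ℝ (Fin 2)) (hI : I = incenterPt A B C)
    (EA : EuclideanSpace ℝ (Fin 2)) (hEA : EA = excenterPt A B C)
    (EB : EuclideanSpace ℝ (Fin 2)) (hEB : EB = excenterPt B C A)
    (EC : EuclideanSpace ℝ (Fin 2)) (hEC : EC = excenterPt C A B) :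
    dist EA I * dist EB EC / (dist EA EC * dist EB I) = dist C B / dist C A := by
  subst hI hEA hEB hEC
  have hABC : ¬ Collinear ℝ {A, B, C} := affineIndependent_iff_not_collinear_set.1 h
  have hA := neg_dist_add_dist_add_dist_pos hABC
  have hB := neg_dist_add_dist_add_dist_pos (A := B) (B := C) (C := A)
    (by rwa [Set.pair_comm, Set.insert_comm])
  have hC := neg_dist_add_dist_add_dist_pos (A := C) (B := A) (C := B)
    (by rwa [Set.insert_comm, Set.pair_comm])
  have h1 := dist_excenterPt_incenterPt_sq A B C hA.ne' (by linarith)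
  have h2 := dist_excenterPt_excenterPt_sq A B C hB.ne' hC.ne'
  have h3 := dist_excenterPt_excenterPt_sq B C A hC.ne' hA.ne'
  have h4 := dist_excenterPt_incenterPt_sq B C A hB.ne' (by linarith)
  rw [incenterPt_rotate] at h4
  have ha : 0 < dist B C := by linarith
  have hb : 0 < dist C A := by linarith
  have hc : 0 < dist A B := by linarith
  rw [dist_comm (excenterPt A B C) (excenterPt C A B), dist_comm C B,
    ← sq_eq_sq₀ (by positivity) (by positivity), div_pow, div_pow, mul_pow, mul_pow,
    h1, h2, h3, h4]
  field_simp
  ring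
end

section
/- Let A, B, C be three complex numbers that are not collinear (affinely independent over ℝ), with incenter I and excenters E_A, E_B, E_C. Then arg(((E_A − I)/(E_A − E_C)) · ((E_B − E_C)/(E_B − I))) = −arg((B − C)/(A − C)). (This is the argument part of the theorem on cross ratios of dual quadruplets.) -/
/-- The incenter of the triangle with vertices `A B C : ℂ`. -/
noncomputable def incenterC (A B C : ℂ) : ℂ :=
  ((dist B C : ℂ) * A + (dist C A : ℂ) * B + (dist A B : ℂ) * C) /
    ((dist B C + dist C A + dist A B : ℝ) : ℂ)

/-- The excenter of the triangle with vertices `A B C : ℂ` opposite the first vertex. -/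
noncomputable def excenterC (A B C : ℂ) : ℂ :=
  ((-(dist B C) : ℂ) * A + (dist C A : ℂ) * B + (dist A B : ℂ) * C) /
    ((-(dist B C) + dist C A + dist A B : ℝ) : ℂ)

/-!
Put `u = B - A`, `v = C - A`, `w = C - B`, so that `a = ‖w‖`, `b = ‖v‖`, `c = ‖u‖`. Each of the
four differences of centres in the cross ratio is a real multiple of `b u + c v`, `a u + c w`,
`c v - b u` or `c w - a u`, and the real factors cancel down to `(a / b)²`. Since `‖u‖² = u ū`,
`(b u + c v) (c v - b u) = c² v² - b² u² = u v (ū v - u v̄)`, and likewise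
`(a u + c w) (c w - a u) = u w (ū w - u w̄)`, where `ū w - u w̄ = ū v - u v̄ = 2i Im (ū v) ≠ 0`.
So the cross ratio is `(a / b)² (C - A) / (C - B)`, the inverse of `(B - C) / (A - C)` up to a
positive factor; as that number is not real, its argument is not `π` and inversion negates it.
-/

open Complex ComplexConjugate

theorem dist_lt_dist_add_dist_of_not_collinear {V P : Type*} [NormedAddCommGroup V]
    [NormedSpace ℝ V] [StrictConvexSpace ℝ V] [MetricSpace P] [NormedAddTorsor V P]
    {x y z : P} (h : ¬Collinear ℝ {x, y, z}) : dist y z < dist z x + dist x y := by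
  have := dist_lt_dist_add_dist_iff.2 fun hw : Wbtw ℝ y x z =>
    h (by simpa [Set.insert_comm] using hw.collinear)
  rwa [dist_comm y x, dist_comm x z, add_comm] at this

theorem not_collinear_rotate {k V P : Type*} [DivisionRing k] [AddCommGroup V] [Module k V]
    [AddTorsor V P] {x y z : P} (h : ¬Collinear k {x, y, z}) : ¬Collinear k {y, z, x} := by
  rwa [Set.insert_comm, Set.pair_comm] at h

namespace Complex

theorem collinear_of_im_div_eq_zero {A B C : ℂ} (h : ((C - A) / (B - A)).im = 0) :
    Collinear ℝ {A, B, C} := by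
  rcases eq_or_ne B A with rfl | hBA
  · simpa using collinear_pair ℝ B C
  have hreal : (((C - A) / (B - A)).re : ℂ) = (C - A) / (B - A) := ext (by simp) (by simp [h])
  refine (collinear_iff_of_mem (p₀ := A) (by simp)).2 ⟨B - A, ?_⟩
  simp only [Set.mem_insert_iff, Set.mem_singleton_iff, forall_eq_or_imp, forall_eq]
  refine ⟨⟨0, by simp⟩, ⟨1, by simp⟩, ⟨((C - A) / (B - A)).re, ?_⟩⟩
  rw [real_smul, vadd_eq_add, hreal, div_mul_cancel₀ _ (sub_ne_zero.2 hBA), sub_add_cancel]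

theorem conj_mul_sub_mul_conj_ne_zero {u v : ℂ} (h : (v / u).im ≠ 0) :
    conj u * v - u * conj v ≠ 0 := by
  intro h0
  have him := congrArg im h0
  simp only [sub_im, mul_im, conj_re, conj_im, zero_im] at him
  apply h
  rw [div_im, ← sub_div, div_eq_zero_iff]
  left
  linarith

theorem norm_mul_add_norm_mul_mul_sub (u v : ℂ) :
    (‖v‖ * u + ‖u‖ * v) * (‖u‖ * v - ‖v‖ * u) = u * v * (conj u * v - u * conj v) := by
  linear_combination u ^ 2 * mul_conj' v - v ^ 2 * mul_conj' u

theorem norm_mul_add_norm_mul_mul_sub_div {u v : ℂ} (h : (v / u).im ≠ 0) :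
    (‖v‖ * u + ‖u‖ * v) * (‖u‖ * v - ‖v‖ * u) /
      ((‖v - u‖ * u + ‖u‖ * (v - u)) * (‖u‖ * (v - u) - ‖v - u‖ * u)) = v / (v - u) := by
  have hu : u ≠ 0 := by
    rintro rfl
    simp at h
  have hK : conj u * (v - u) - u * conj (v - u) = conj u * v - u * conj v := by
    simp only [map_sub]
    ring
  rw [norm_mul_add_norm_mul_mul_sub, norm_mul_add_norm_mul_mul_sub, hK,
    mul_div_mul_right _ _ (conj_mul_sub_mul_conj_ne_zero h), mul_div_mul_left _ _ hu]

end Complex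

section

variable (A B C : ℂ)

theorem incenterC_rotate : incenterC B C A = incenterC A B C := by
  rw [incenterC, incenterC]
  push_cast
  ring

theorem excenterC_sub_incenterC (h₁ : -dist B C + dist C A + dist A B ≠ 0)
    (h₀ : dist B C + dist C A + dist A B ≠ 0) :
    excenterC A B C - incenterC A B C =
      2 * dist B C * (dist C A * (B - A) + dist A B * (C - A)) /
        ((-dist B C + dist C A + dist A B) * (dist B C + dist C A + dist A B)) := by
  rw [excenterC, incenterC, div_sub_div _ _ (ofReal_ne_zero.2 h₁) (ofReal_ne_zero.2 h₀)]
  push_cast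
  ring

theorem excenterC_sub_excenterC (h₁ : -dist B C + dist C A + dist A B ≠ 0)
    (h₃ : -dist A B + dist B C + dist C A ≠ 0) :
    excenterC A B C - excenterC C A B =
      2 * dist C A * (dist B C * (B - A) + dist A B * (C - B)) /
        ((-dist B C + dist C A + dist A B) * (-dist A B + dist B C + dist C A)) := by
  rw [excenterC, excenterC, div_sub_div _ _ (ofReal_ne_zero.2 h₁) (ofReal_ne_zero.2 h₃)]
  push_cast
  ring

theorem crossRatio_excenterC_incenterC_eq (h : ¬Collinear ℝ {A, B, C}) :
    (excenterC A B C - incenterC A B C) / (excenterC A B C - excenterC C A B) *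
        ((excenterC B C A - excenterC C A B) / (excenterC B C A - incenterC A B C)) =
      (((dist B C / dist C A) ^ 2 : ℝ) : ℂ) * ((C - A) / (C - B)) := by
  have hA := dist_lt_dist_add_dist_of_not_collinear h
  have hB := dist_lt_dist_add_dist_of_not_collinear (not_collinear_rotate h)
  have hC := dist_lt_dist_add_dist_of_not_collinear (not_collinear_rotate (not_collinear_rotate h))
  have hratio := norm_mul_add_norm_mul_mul_sub_div (u := B - A) (v := C - A)
    fun h0 => h (collinear_of_im_div_eq_zero h0)
  rw [sub_sub_sub_cancel_right, ← dist_eq B A, ← dist_eq C A, ← dist_eq C B, dist_comm B A,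
    dist_comm C B] at hratio
  rw [excenterC_sub_incenterC A B C (by linarith) (by linarith),
    excenterC_sub_excenterC A B C (by linarith) (by linarith),
    ← neg_sub (excenterC C A B), excenterC_sub_excenterC C A B (by linarith) (by linarith),
    ← incenterC_rotate, excenterC_sub_incenterC B C A (by linarith) (by linarith), ← hratio]
  set a := dist B C
  set b := dist C A
  set c := dist A B
  have hs : (a + b + c : ℂ) ≠ 0 := by exact_mod_cast (by linarith : 0 < a + b + c).ne'
  have hsA : (-a + b + c : ℂ) ≠ 0 := by exact_mod_cast (by linarith : 0 < -a + b + c).ne'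
  have hsB : (-b + c + a : ℂ) ≠ 0 := by exact_mod_cast (by linarith : 0 < -b + c + a).ne'
  have hsC : (-c + a + b : ℂ) ≠ 0 := by exact_mod_cast (by linarith : 0 < -c + a + b).ne'
  push_cast
  field_simp
  ring

end

/-- The argument part of the cross-ratio theorem for dual quadruplets:
`arg(((E_A − I)/(E_A − E_C))·((E_B − E_C)/(E_B − I))) = −arg((B − C)/(A − C))`. -/
theorem cross_ratio_arg (A B C : ℂ) (h : AffineIndependent ℝ ![A, B, C]) :
    Complex.arg
      ((excenterC A B C - incenterC A B C) / (excenterC A B C - excenterC C A B) *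
        ((excenterC B C A - excenterC C A B) / (excenterC B C A - incenterC A B C))) =
    -Complex.arg ((B - C) / (A - C)) := by
  have hnc := affineIndependent_iff_not_collinear_set.mp h
  have him : ((B - C) / (A - C)).im ≠ 0 := fun h0 =>
    not_collinear_rotate (not_collinear_rotate hnc) (collinear_of_im_div_eq_zero h0)
  have hpos : 0 < (dist B C / dist C A) ^ 2 :=
    pow_pos (div_pos (dist_pos.2 (ne₂₃_of_not_collinear hnc))
      (dist_pos.2 (ne₁₃_of_not_collinear hnc).symm)) 2
  have hinv : (C - A) / (C - B) = ((B - C) / (A - C))⁻¹ := by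
    rw [inv_div, ← neg_sub A C, ← neg_sub B C, neg_div_neg_eq]
  rw [crossRatio_excenterC_incenterC_eq A B C hnc, arg_real_mul _ hpos, hinv, arg_inv,
    if_neg fun hπ => him (arg_eq_pi_iff.1 hπ).2]
end
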